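/- Let n₁, n₂ be positive integers and l, u ∈ ℝ^{n₁} with 0 ≤ l_i ≤ u_i for all i. Define U^row(l,u) = { W ∈ ℝ^{n₁×n₂} : W_{ij} ≥ 0 for all i, j; l_i ≤ Σ_{j=1}^{n₂} W_{ij} ≤ u_i for each i; rank(W) ≤ 1 }. Then the convex hull of U^row(l,u) equals the projection onto W of the polyhedron { (W, t) ∈ ℝ^{n₁×n₂} × ℝ^{n₂} : Σ_{j=1}^{n₂} t_j = 1; t_j ≥ 0 for all j; l_i t_j ≤ W_{ij} ≤ u_i t_j for all i = 1,…,n₁ and j = 1,…,n₂ }. -/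

import Mathlib

open Matrix Finset

lemma aux_rank_le_one {n₁ n₂ : ℕ} (c : Fin n₁ → ℝ) (j : Fin n₂)
    (V : Matrix (Fin n₁) (Fin n₂) ℝ) (hV : ∀ i j', V i j' = if j' = j then c i else 0) :
    V.rank ≤ 1 := by
  have hr : LinearMap.range V.mulVecLin ≤ Submodule.span ℝ {c} := by
    rintro y ⟨x, rfl⟩
    have : V.mulVecLin x = x j • c := by
      funext i
      simp [Matrix.mulVecLin_apply, Matrix.mulVec, dotProduct, hV,
        mul_comm, Finset.sum_ite_eq' (Finset.univ : Finset (Fin n₂)) j]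
    rw [this]
    exact Submodule.smul_mem _ _ (Submodule.mem_span_singleton_self c)
  calc V.rank = Module.finrank ℝ (LinearMap.range V.mulVecLin) := rfl
    _ ≤ Module.finrank ℝ (Submodule.span ℝ {c}) := Submodule.finrank_mono hr
    _ ≤ 1 := by
        simpa using finrank_span_le_card (R := ℝ) ({c} : Set (Fin n₁ → ℝ))

lemma aux_minor {n₁ n₂ : ℕ} (W : Matrix (Fin n₁) (Fin n₂) ℝ) (hW : W.rank ≤ 1)
    (i i' : Fin n₁) (j j' : Fin n₂) : W i j * W i' j' = W i j' * W i' j := by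
  have hp : (LinearMap.range W.mulVecLin).IsPrincipal := by
    rw [← Submodule.finrank_le_one_iff_isPrincipal]
    exact hW
  obtain ⟨a, ha⟩ := hp
  have hcol : ∀ k : Fin n₂, ∃ c : ℝ, (fun i => W i k) = c • a := by
    intro k
    have : (fun i => W i k) ∈ LinearMap.range W.mulVecLin := by
      refine ⟨Pi.single k 1, ?_⟩
      funext i
      simp [Matrix.mulVecLin_apply, Matrix.mulVec_single]
    rw [ha, Submodule.mem_span_singleton] at this
    obtain ⟨c, hc⟩ := this
    exact ⟨c, hc.symm⟩
  obtain ⟨c, hc⟩ := hcol j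
  obtain ⟨c', hc'⟩ := hcol j'
  have h1 : ∀ i, W i j = c * a i := fun i => congrFun hc i
  have h2 : ∀ i, W i j' = c' * a i := fun i => congrFun hc' i
  rw [h1, h2, h1, h2]; ring

/-- The convex hull of the row-bounded rank-1 set U^row(l,u) equals the projection
of the compact extended formulation onto the W variables. -/
theorem statement10 (n₁ n₂ : ℕ) (hn₁ : 0 < n₁) (hn₂ : 0 < n₂)
    (l u : Fin n₁ → ℝ) (hl : ∀ i, 0 ≤ l i) (hlu : ∀ i, l i ≤ u i) :
    convexHull ℝ
      {W : Matrix (Fin n₁) (Fin n₂) ℝ |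
        (∀ i j, 0 ≤ W i j) ∧ (∀ i, l i ≤ ∑ j, W i j ∧ ∑ j, W i j ≤ u i) ∧
        W.rank ≤ 1} =
    {W : Matrix (Fin n₁) (Fin n₂) ℝ | ∃ t : Fin n₂ → ℝ,
      (∑ j, t j) = 1 ∧ (∀ j, 0 ≤ t j) ∧
      ∀ i j, l i * t j ≤ W i j ∧ W i j ≤ u i * t j} := by
  apply le_antisymm
  · -- convexHull ⊆ projection
    apply convexHull_min
    · -- the set is contained in the projection
      rintro W ⟨hpos, hrow, hrk⟩
      set S : ℝ := ∑ i, ∑ j, W i j with hS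
      rcases eq_or_lt_of_le (show (0:ℝ) ≤ S from Finset.sum_nonneg fun i _ =>
        Finset.sum_nonneg fun j _ => hpos i j) with hS0 | hSpos
      · -- S = 0 : W = 0 and l = 0
        have hWz : ∀ i j, W i j = 0 := by
          intro i j
          have h1 : ∀ i ∈ Finset.univ, (0:ℝ) ≤ ∑ j, W i j :=
            fun i _ => Finset.sum_nonneg fun j _ => hpos i j
          have h2 := (Finset.sum_eq_zero_iff_of_nonneg h1).mp hS0.symm i (Finset.mem_univ i)
          have h3 := (Finset.sum_eq_zero_iff_of_nonneg
            (fun j _ => hpos i j)).mp h2 j (Finset.mem_univ j)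
          exact h3
        have hl0 : ∀ i, l i = 0 := by
          intro i
          have := (hrow i).1
          have hz : ∑ j, W i j = 0 := Finset.sum_eq_zero fun j _ => hWz i j
          linarith [hl i]
        refine ⟨fun _ => (n₂ : ℝ)⁻¹, ?_, fun j => by positivity, fun i j => ?_⟩
        · rw [Finset.sum_const, Finset.card_univ, Fintype.card_fin, nsmul_eq_mul]
          field_simp
        · constructor
          · rw [hl0 i, hWz i j]; simp
          · rw [hWz i j]
            have : (0:ℝ) ≤ u i := le_trans (hl i) (hlu i)
            positivity
      · -- S > 0
        refine ⟨fun j => (∑ i, W i j) / S, ?_, fun j => by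
            have : (0:ℝ) ≤ ∑ i, W i j := Finset.sum_nonneg fun i _ => hpos i j
            positivity, fun i j => ?_⟩
        · rw [← Finset.sum_div, Finset.sum_comm]
          field_simp
          exact hS.symm
        · have key : W i j * S = (∑ j', W i j') * (∑ i', W i' j) := by
            calc W i j * S = ∑ i', ∑ j', W i j * W i' j' := by
                  rw [hS, Finset.mul_sum]; exact Finset.sum_congr rfl fun i' _ => Finset.mul_sum ..
            _ = ∑ i', ∑ j', W i j' * W i' j := by
                  exact Finset.sum_congr rfl fun i' _ => Finset.sum_congr rfl fun j' _ =>
                    aux_minor W hrk i i' j j'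
            _ = ∑ i', (∑ j', W i j') * W i' j := by
                  exact Finset.sum_congr rfl fun i' _ => (Finset.sum_mul ..).symm
            _ = (∑ j', W i j') * (∑ i', W i' j) := by rw [← Finset.mul_sum]
          have hsj : (0:ℝ) ≤ ∑ i', W i' j := Finset.sum_nonneg fun i' _ => hpos i' j
          have hlow : l i * (∑ i', W i' j) ≤ W i j * S :=
            le_of_le_of_eq (mul_le_mul_of_nonneg_right (hrow i).1 hsj) key.symm
          have hupp : W i j * S ≤ u i * (∑ i', W i' j) :=
            le_of_eq_of_le key (mul_le_mul_of_nonneg_right (hrow i).2 hsj)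
          constructor
          · show l i * ((∑ i', W i' j) / S) ≤ W i j
            calc l i * ((∑ i', W i' j) / S) = (l i * ∑ i', W i' j) / S := by ring
              _ ≤ (W i j * S) / S := by gcongr
              _ = W i j := by field_simp
          · show W i j ≤ u i * ((∑ i', W i' j) / S)
            calc W i j = (W i j * S) / S := by field_simp
              _ ≤ (u i * ∑ i', W i' j) / S := by gcongr
              _ = u i * ((∑ i', W i' j) / S) := by ring
    · -- the projection is convex
      rintro W₁ ⟨t₁, ht₁s, ht₁n, ht₁⟩ W₂ ⟨t₂, ht₂s, ht₂n, ht₂⟩ a b ha hb hab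
      refine ⟨a • t₁ + b • t₂, ?_, fun j => by
          have := ht₁n j; have := ht₂n j
          simp only [Pi.add_apply, Pi.smul_apply, smul_eq_mul]; positivity, fun i j => ?_⟩
      · simp only [Pi.add_apply, Pi.smul_apply, smul_eq_mul]
        rw [Finset.sum_add_distrib, ← Finset.mul_sum, ← Finset.mul_sum, ht₁s, ht₂s]
        linarith
      · have h1 := ht₁ i j; have h2 := ht₂ i j
        have hW : (a • W₁ + b • W₂) i j = a * W₁ i j + b * W₂ i j := by
          simp [Matrix.add_apply]
        constructor
        · rw [hW]
          simp only [Pi.add_apply, Pi.smul_apply, smul_eq_mul]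
          nlinarith [h1.1, h2.1]
        · rw [hW]
          simp only [Pi.add_apply, Pi.smul_apply, smul_eq_mul]
          nlinarith [h1.2, h2.2]
  · -- projection ⊆ convexHull
    rintro W ⟨t, hts, htn, ht⟩
    set z : Fin n₂ → Matrix (Fin n₁) (Fin n₂) ℝ := fun j =>
      Matrix.of fun i j' => if j' = j then (if t j = 0 then l i else W i j / t j) else 0 with hz
    have hzmem : ∀ j, z j ∈ {W : Matrix (Fin n₁) (Fin n₂) ℝ |
        (∀ i j, 0 ≤ W i j) ∧ (∀ i, l i ≤ ∑ j, W i j ∧ ∑ j, W i j ≤ u i) ∧ W.rank ≤ 1} := by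
      intro j
      have hrowsum : ∀ i, ∑ j', z j i j' = if t j = 0 then l i else W i j / t j := by
        intro i
        simp [hz, Finset.sum_ite_eq' (Finset.univ : Finset (Fin n₂)) j]
      refine ⟨?_, ?_, aux_rank_le_one _ j (z j) fun i j' => rfl⟩
      · intro i j'
        simp only [hz, Matrix.of_apply]
        split_ifs with h1 h2
        · exact hl i
        · have htpos : 0 < t j := lt_of_le_of_ne (htn j) (Ne.symm h2)
          have hWn : 0 ≤ W i j := le_trans (mul_nonneg (hl i) (htn j)) (ht i j).1
          positivity
        · exact le_refl 0
      · intro i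
        rw [hrowsum i]
        split_ifs with h1
        · exact ⟨le_refl _, hlu i⟩
        · have htpos : 0 < t j := lt_of_le_of_ne (htn j) (Ne.symm h1)
          constructor
          · rw [le_div_iff₀ htpos]; exact (ht i j).1
          · rw [div_le_iff₀ htpos]; exact (ht i j).2
    have hsum : ∑ j, t j • z j = W := by
      funext i j₀
      have h0 : (∑ k, t k • z k) i j₀ = ∑ k, t k * z k i j₀ := by
        rw [Matrix.sum_apply]
        exact Finset.sum_congr rfl fun k _ => rfl
      have hterm : ∀ k, t k * z k i j₀ = if k = j₀ then W i j₀ else 0 := by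
        intro k
        by_cases hk : k = j₀
        · subst hk
          simp only [hz, Matrix.of_apply, if_pos rfl]
          by_cases h0 : t k = 0
          · rw [if_pos h0, h0, zero_mul]
            have h1 := (ht i k).1; have h2 := (ht i k).2
            rw [h0, mul_zero] at h1 h2
            simp only [if_true]
            linarith
          · rw [if_neg h0]; simp only [if_true]; field_simp
        · simp only [hz, Matrix.of_apply]
          rw [if_neg (fun h => hk h.symm), mul_zero, if_neg hk]
      rw [h0, Finset.sum_congr rfl fun k _ => hterm k, Finset.sum_ite_eq' Finset.univ j₀]
      simp
    have := Finset.centerMass_mem_convexHull (Finset.univ : Finset (Fin n₂))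
      (fun j _ => htn j) (by rw [hts]; norm_num) (fun j _ => hzmem j)
    rwa [Finset.centerMass, hts, inv_one, one_smul, hsum] at this
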